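/- arXiv:1603.01215 — 4 statements merged into one kernel-verified Lean document; each statement's English description precedes it below -/
import Mathlib

section
/- Let 𝓕 be a nonempty family of subsets of a nonempty finite set S. Then ∑_{(A,B)∈𝓕²} |A ⊗ B| = ∑_{(A,B)∈𝓕²} |A ⊕ B| + ∑_{x∈S} δ_x², where the sums over pairs range over all ordered pairs of members of 𝓕. -/
/-!
Write `σ_A(x) = 1` if `x ∈ A` and `-1` otherwise. For `x ∈ S` we have
`[x ∉ A ∆ B] - [x ∈ A ∆ B] = σ_A(x) σ_B(x)`, so `|A ⊗ B| - |A ⊕ B| = ∑ₓ σ_A(x) σ_B(x)`.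
Summing over all ordered pairs and exchanging the sums gives `∑ₓ (∑_A σ_A(x))²`,
and `∑_{A ∈ 𝓕} σ_A(x) = |𝓕_x| - (|𝓕| - |𝓕_x|) = δ_x`.
-/

open Finset
open scoped symmDiff

section

variable {α : Type*} [DecidableEq α]

def signIndicator (A : Finset α) (x : α) : ℤ := if x ∈ A then 1 else -1

lemma card_sdiff_symmDiff_sub_card_symmDiff {S A B : Finset α} (hA : A ⊆ S) (hB : B ⊆ S) :
    ((S \ A ∆ B).card : ℤ) - (A ∆ B).card = ∑ x ∈ S, signIndicator A x * signIndicator B x := by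
  have hAB : S.filter (· ∈ A ∆ B) = A ∆ B := by
    rw [filter_mem_eq_inter, inter_eq_right.mpr (symmDiff_le_sup.trans (sup_le hA hB))]
  rw [sdiff_eq_filter, ← hAB, card_filter, card_filter, Nat.cast_sum, Nat.cast_sum,
    ← sum_sub_distrib]
  refine sum_congr rfl fun x hx => ?_
  by_cases hxA : x ∈ A <;> by_cases hxB : x ∈ B <;>
    simp [signIndicator, mem_symmDiff, hx, hxA, hxB]

lemma sum_signIndicator (𝓕 : Finset (Finset α)) (x : α) :
    ∑ A ∈ 𝓕, signIndicator A x =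
      ((𝓕.filter (fun A => x ∈ A)).card : ℤ) - ((𝓕.card : ℤ) - (𝓕.filter (fun A => x ∈ A)).card) := by
  have hsplit := card_filter_add_card_filter_not (s := 𝓕) (fun A => x ∈ A)
  simp only [signIndicator, sum_ite, sum_const, nsmul_eq_mul, mul_one, mul_neg]
  omega

lemma sum_sum_sum_signIndicator_mul_eq_sum_sq (S : Finset α) (𝓕 : Finset (Finset α)) :
    ∑ A ∈ 𝓕, ∑ B ∈ 𝓕, ∑ x ∈ S, signIndicator A x * signIndicator B x =
      ∑ x ∈ S, (∑ A ∈ 𝓕, signIndicator A x) ^ 2 := by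
  simp_rw [sq, sum_mul_sum]
  exact (sum_congr rfl fun _ _ => Finset.sum_comm).trans Finset.sum_comm

end

theorem stmt_0_general {α : Type*} [DecidableEq α] (S : Finset α)
    (𝓕 : Finset (Finset α)) (hsub : ∀ A ∈ 𝓕, A ⊆ S) :
    (∑ A ∈ 𝓕, ∑ B ∈ 𝓕, ((S \ ((A \ B) ∪ (B \ A))).card : ℤ)) =
      (∑ A ∈ 𝓕, ∑ B ∈ 𝓕, (((A \ B) ∪ (B \ A)).card : ℤ)) +
      ∑ x ∈ S, (((𝓕.filter (fun A => x ∈ A)).card : ℤ) -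
        ((𝓕.card : ℤ) - ((𝓕.filter (fun A => x ∈ A)).card : ℤ))) ^ 2 := by
  rw [← sub_eq_iff_eq_add', ← sum_sub_distrib]
  simp_rw [← sum_signIndicator, ← sum_sub_distrib]
  change ∑ A ∈ 𝓕, ∑ B ∈ 𝓕, (((S \ A ∆ B).card : ℤ) - (A ∆ B).card) = _
  rw [← sum_sum_sum_signIndicator_mul_eq_sum_sq]
  exact sum_congr rfl fun A hA => sum_congr rfl fun B hB =>
    card_sdiff_symmDiff_sub_card_symmDiff (hsub A hA) (hsub B hB)

theorem stmt_0 {α : Type*} [DecidableEq α] (S : Finset α) (hS : S.Nonempty)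
    (𝓕 : Finset (Finset α)) (h𝓕 : 𝓕.Nonempty) (hsub : ∀ A ∈ 𝓕, A ⊆ S) :
    (∑ A ∈ 𝓕, ∑ B ∈ 𝓕, ((S \ ((A \ B) ∪ (B \ A))).card : ℤ)) =
      (∑ A ∈ 𝓕, ∑ B ∈ 𝓕, (((A \ B) ∪ (B \ A)).card : ℤ)) +
      ∑ x ∈ S, (((𝓕.filter (fun A => x ∈ A)).card : ℤ) -
        ((𝓕.card : ℤ) - ((𝓕.filter (fun A => x ∈ A)).card : ℤ))) ^ 2 :=
  stmt_0_general S 𝓕 hsub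
end

section
/- Let 𝓕 be a nonempty family of subsets of a nonempty finite set S. Then ∑_{(A,B)∈𝓕²} |A ⊗ B| ≥ ∑_{(A,B)∈𝓕²} |A ⊕ B|, where the sums range over all ordered pairs of members of 𝓕. -/
/-!
Give each member `A` the spin `x ↦ ±1` according as `x ∈ A`. For `A, B ⊆ S` the difference
`|A ⊗ B| - |A ⊕ B|` counts agreements minus disagreements of the spins of `A` and `B` on `S`,
i.e. it is `∑ x ∈ S, spin A x * spin B x`. Summing over all ordered pairs gives
`∑ x ∈ S, (∑ A ∈ 𝓕, spin A x) ^ 2 ≥ 0`.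
-/

open Finset
open scoped symmDiff

namespace Finset

variable {α : Type*} [DecidableEq α]

def spin (A : Finset α) (x : α) : ℤ := if x ∈ A then 1 else -1

lemma spin_mul_spin (A B : Finset α) (x : α) :
    spin A x * spin B x = if x ∈ A ∆ B then -1 else 1 := by
  unfold spin
  by_cases hA : x ∈ A <;> by_cases hB : x ∈ B <;> simp [mem_symmDiff, hA, hB]

lemma natCast_card_eq_sum_boole {S T : Finset α} (h : T ⊆ S) :
    (#T : ℤ) = ∑ x ∈ S, if x ∈ T then 1 else 0 := by
  rw [sum_boole, filter_mem_eq_inter, inter_eq_right.2 h]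

lemma card_sdiff_symmDiff_sub_card_symmDiff {S A B : Finset α} (hA : A ⊆ S) (hB : B ⊆ S) :
    (#(S \ A ∆ B) : ℤ) - #(A ∆ B) = ∑ x ∈ S, spin A x * spin B x := by
  have hAB : A ∆ B ⊆ S := symmDiff_le_sup.trans (union_subset hA hB)
  rw [natCast_card_eq_sum_boole sdiff_subset, natCast_card_eq_sum_boole hAB, ← sum_sub_distrib]
  refine sum_congr rfl fun x hx => ?_
  rw [spin_mul_spin]
  by_cases hx' : x ∈ A ∆ B <;> simp [hx, hx']

lemma sum_sum_card_sdiff_symmDiff_sub_card_symmDiff {S : Finset α} {𝓕 : Finset (Finset α)}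
    (hsub : ∀ A ∈ 𝓕, A ⊆ S) :
    ∑ A ∈ 𝓕, ∑ B ∈ 𝓕, ((#(S \ A ∆ B) : ℤ) - #(A ∆ B)) =
      ∑ x ∈ S, (∑ A ∈ 𝓕, spin A x) ^ 2 := by
  calc ∑ A ∈ 𝓕, ∑ B ∈ 𝓕, ((#(S \ A ∆ B) : ℤ) - #(A ∆ B))
      = ∑ A ∈ 𝓕, ∑ B ∈ 𝓕, ∑ x ∈ S, spin A x * spin B x :=
        sum_congr rfl fun A hA => sum_congr rfl fun B hB =>
          card_sdiff_symmDiff_sub_card_symmDiff (hsub A hA) (hsub B hB)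
    _ = ∑ x ∈ S, ∑ A ∈ 𝓕, ∑ B ∈ 𝓕, spin A x * spin B x := by
        simp_rw [sum_comm (s := 𝓕) (t := S)]
    _ = ∑ x ∈ S, (∑ A ∈ 𝓕, spin A x) ^ 2 := by
        simp_rw [sq, sum_mul_sum]

end Finset

theorem stmt_1_general {α : Type*} [DecidableEq α] (S : Finset α)
    (𝓕 : Finset (Finset α)) (hsub : ∀ A ∈ 𝓕, A ⊆ S) :
    (∑ A ∈ 𝓕, ∑ B ∈ 𝓕, (S \ ((A \ B) ∪ (B \ A))).card) ≥
      ∑ A ∈ 𝓕, ∑ B ∈ 𝓕, ((A \ B) ∪ (B \ A)).card := by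
  have key := sum_sum_card_sdiff_symmDiff_sub_card_symmDiff hsub
  simp only [symmDiff_def, sup_eq_union, sum_sub_distrib] at key
  have hsq : 0 ≤ ∑ x ∈ S, (∑ A ∈ 𝓕, spin A x) ^ 2 := sum_nonneg fun _ _ => sq_nonneg _
  zify
  linarith

theorem stmt_1 {α : Type*} [DecidableEq α] (S : Finset α) (hS : S.Nonempty)
    (𝓕 : Finset (Finset α)) (h𝓕 : 𝓕.Nonempty) (hsub : ∀ A ∈ 𝓕, A ⊆ S) :
    (∑ A ∈ 𝓕, ∑ B ∈ 𝓕, (S \ ((A \ B) ∪ (B \ A))).card) ≥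
      ∑ A ∈ 𝓕, ∑ B ∈ 𝓕, ((A \ B) ∪ (B \ A)).card :=
  stmt_1_general S 𝓕 hsub
end

section
/- There exists a nonempty finite set S and a reduced union-closed family 𝓕 on S such that 2 ∑_{A∈𝓕} |A| < |𝓕| · |S|, i.e. the average cardinality of members of 𝓕 is strictly less than half the cardinality of S. (An example is the family {∅, {a}, {b}, {a,b}, {a,b,c}} on S = {a,b,c}.) -/
/-- `𝓕` is a reduced union-closed family on `S`. -/
def ReducedUnionClosed {α : Type*} [DecidableEq α] (S : Finset α)
    (𝓕 : Finset (Finset α)) : Prop :=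
  (∀ A ∈ 𝓕, A ⊆ S) ∧ (∅ ∈ 𝓕) ∧ (S ∈ 𝓕) ∧
  (∀ x ∈ S, ∃ A ∈ 𝓕, ∃ B ∈ 𝓕, A \ B = {x}) ∧
  (∀ A ∈ 𝓕, ∀ B ∈ 𝓕, A ∪ B ∈ 𝓕)

theorem stmt_11 :
    ∃ (S : Finset ℕ) (𝓕 : Finset (Finset ℕ)), S.Nonempty ∧
      ReducedUnionClosed S 𝓕 ∧
      2 * (∑ A ∈ 𝓕, A.card) < 𝓕.card * S.card := by
  -- The member sizes are 0, 1, 1, 2, 3, so the inequality reads 2 * 7 < 5 * 3.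
  refine ⟨{0, 1, 2}, {∅, {0}, {1}, {0, 1}, {0, 1, 2}}, by decide, ?_, by decide⟩
  unfold ReducedUnionClosed
  decide
end

section
/- Let L be a finite lattice and for a ∈ L let 𝓙_a denote the set of irreducible filters of L that contain a. Then for all a, b ∈ L: a ≤ b if and only if 𝓙_a ⊆ 𝓙_b; in particular the map a ↦ 𝓙_a is injective. Moreover 𝓙_{a ⊓ b} = 𝓙_a ∩ 𝓙_b for all a, b ∈ L. -/
/-- `F` is a filter of the lattice `L`: nonempty, upward closed and meet-closed. -/
def IsLatticeFilter {L : Type*} [Lattice L] (F : Set L) : Prop :=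
  F.Nonempty ∧ (∀ a ∈ F, ∀ b, a ≤ b → b ∈ F) ∧ (∀ a ∈ F, ∀ b ∈ F, a ⊓ b ∈ F)

/-- `F` is an irreducible filter: whenever `F` is the intersection of a collection of
filters, `F` belongs to that collection. -/
def IsIrreducibleLatticeFilter {L : Type*} [Lattice L] (F : Set L) : Prop :=
  IsLatticeFilter F ∧
    ∀ 𝒮 : Set (Set L), (∀ G ∈ 𝒮, IsLatticeFilter G) → F = ⋂₀ 𝒮 → F ∈ 𝒮

/-- `𝓙 a`: the set of irreducible filters of `L` containing `a`. -/
def irreducibleFiltersContaining {L : Type*} [Lattice L] (a : L) : Set (Set L) :=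
  {F | IsIrreducibleLatticeFilter F ∧ a ∈ F}

/-! A filter maximal among those avoiding `x` is irreducible: every filter strictly above it
contains `x`, so the intersection of any family of such filters still contains `x`. Zorn's lemma
therefore separates `x` from any filter avoiding it by an irreducible filter; applied to `Ici a`
and `b` this shows `a ≤ b` as soon as `𝓙 a ⊆ 𝓙 b`. -/

namespace IsLatticeFilter

variable {L : Type*} [Lattice L]

lemma Ici (a : L) : IsLatticeFilter (Set.Ici a) :=
  ⟨⟨a, le_rfl⟩, fun _ ha _ hab => ha.trans hab, fun _ hb _ hc => le_inf hb hc⟩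

lemma sUnion {c : Set (Set L)} (hne : c.Nonempty) (hdir : DirectedOn (· ⊆ ·) c)
    (hc : ∀ F ∈ c, IsLatticeFilter F) : IsLatticeFilter (⋃₀ c) := by
  obtain ⟨F₀, hF₀⟩ := hne
  obtain ⟨x, hx⟩ := (hc F₀ hF₀).1
  refine ⟨⟨x, F₀, hF₀, hx⟩, ?_, ?_⟩
  · rintro a ⟨F, hF, haF⟩ b hab
    exact ⟨F, hF, (hc F hF).2.1 a haF b hab⟩
  · rintro a ⟨F, hF, haF⟩ b ⟨G, hG, hbG⟩
    obtain ⟨H, hH, hFH, hGH⟩ := hdir F hF G hG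
    exact ⟨H, hH, (hc H hH).2.2 a (hFH haF) b (hGH hbG)⟩

lemma isIrreducible_of_maximal {G : Set L} {x : L} (hG : IsLatticeFilter G) (hxG : x ∉ G)
    (hmax : ∀ H, IsLatticeFilter H → G ⊆ H → x ∉ H → H ⊆ G) : IsIrreducibleLatticeFilter G := by
  refine ⟨hG, fun 𝒮 h𝒮 hG𝒮 => ?_⟩
  by_contra hG_not_mem
  refine hxG (hG𝒮 ▸ fun H hH => ?_)
  have hGH : G ⊆ H := hG𝒮 ▸ Set.sInter_subset_of_mem hH
  by_contra hxH
  exact hG_not_mem (hGH.antisymm (hmax H (h𝒮 H hH) hGH hxH) ▸ hH)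

lemma exists_isIrreducible_of_notMem {F : Set L} {x : L} (hF : IsLatticeFilter F) (hx : x ∉ F) :
    ∃ G, IsIrreducibleLatticeFilter G ∧ F ⊆ G ∧ x ∉ G := by
  obtain ⟨G, hFG, ⟨hG, hxG⟩, hmax⟩ :=
    zorn_subset_nonempty {G | IsLatticeFilter G ∧ x ∉ G}
      (fun c hcS hchain hne => ⟨⋃₀ c,
        ⟨sUnion hne hchain.directedOn fun G hG => (hcS hG).1,
          fun ⟨G, hG, hxG⟩ => (hcS hG).2 hxG⟩,
        fun _ => Set.subset_sUnion_of_mem⟩)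
      F ⟨hF, hx⟩
  exact ⟨G, isIrreducible_of_maximal hG hxG fun H hH hGH hxH => hmax ⟨hH, hxH⟩ hGH, hFG, hxG⟩

end IsLatticeFilter

section

variable {L : Type*} [Lattice L]

lemma irreducibleFiltersContaining_subset_iff {a b : L} :
    irreducibleFiltersContaining a ⊆ irreducibleFiltersContaining b ↔ a ≤ b := by
  refine ⟨fun hsub => ?_, fun hab F ⟨hF, haF⟩ => ⟨hF, hF.1.2.1 a haF b hab⟩⟩
  by_contra hab
  obtain ⟨G, hG, haG, hbG⟩ := (IsLatticeFilter.Ici a).exists_isIrreducible_of_notMem hab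
  exact hbG (hsub ⟨hG, haG le_rfl⟩).2

lemma irreducibleFiltersContaining_injective :
    Function.Injective (irreducibleFiltersContaining : L → Set (Set L)) := fun _ _ h =>
  le_antisymm (irreducibleFiltersContaining_subset_iff.1 h.subset)
    (irreducibleFiltersContaining_subset_iff.1 h.superset)

lemma irreducibleFiltersContaining_inf (a b : L) :
    irreducibleFiltersContaining (a ⊓ b) =
      irreducibleFiltersContaining a ∩ irreducibleFiltersContaining b := by
  ext F
  constructor
  · rintro ⟨hF, hab⟩
    exact ⟨⟨hF, hF.1.2.1 _ hab a inf_le_left⟩, ⟨hF, hF.1.2.1 _ hab b inf_le_right⟩⟩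
  · rintro ⟨⟨hF, ha⟩, -, hb⟩
    exact ⟨hF, hF.1.2.2 a ha b hb⟩

end

theorem stmt_15_general {L : Type*} [Lattice L] :
    (∀ a b : L, a ≤ b ↔
        irreducibleFiltersContaining a ⊆ irreducibleFiltersContaining b) ∧
    Function.Injective (irreducibleFiltersContaining : L → Set (Set L)) ∧
    (∀ a b : L, irreducibleFiltersContaining (a ⊓ b) =
        irreducibleFiltersContaining a ∩ irreducibleFiltersContaining b) :=
  ⟨fun _ _ => irreducibleFiltersContaining_subset_iff.symm,
    irreducibleFiltersContaining_injective, irreducibleFiltersContaining_inf⟩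

theorem stmt_15 {L : Type*} [Lattice L] [Fintype L] [Nontrivial L] :
    (∀ a b : L, a ≤ b ↔
        irreducibleFiltersContaining a ⊆ irreducibleFiltersContaining b) ∧
    Function.Injective (irreducibleFiltersContaining : L → Set (Set L)) ∧
    (∀ a b : L, irreducibleFiltersContaining (a ⊓ b) =
        irreducibleFiltersContaining a ∩ irreducibleFiltersContaining b) :=
  stmt_15_general
end
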